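/- arXiv:1410.2447 — 7 statements merged into one kernel-verified Lean document; each statement's English description precedes it below -/
import Mathlib

section
/- For any e in the kernel of AᵀA and any index i with c_ii = ‖column i of A‖² > 0, |e_i| ≤ ρ(i) · ‖e‖₁, where ρ(i) = ν(i)/(1+ν(i)) and ν(i) = max_{j≠i} |c_ij| / c_ii with C = AᵀA. -/
open Matrix

/-- For `e ∈ ker (AᵀA)` and any index `i` with `c_ii > 0`,
`|e i| ≤ ρ i * ‖e‖₁` where `ρ i = ν i / (1 + ν i)` and
`ν i = max_{j ≠ i} |c_ij| / c_ii`. -/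
theorem stmt_1 {n m : ℕ} (A : Matrix (Fin n) (Fin m) ℝ)
    (C : Matrix (Fin m) (Fin m) ℝ) (hC : C = Aᵀ * A)
    (ν ρ : Fin m → ℝ)
    (hν_ub : ∀ i, ∀ j ≠ i, |C i j| / C i i ≤ ν i)
    (hν_mem : ∀ i, ∃ j ≠ i, ν i = |C i j| / C i i)
    (hρ : ∀ i, ρ i = ν i / (1 + ν i))
    (e : Fin m → ℝ) (he : C.mulVec e = 0)
    (i : Fin m) (hcii : 0 < C i i) :
    |e i| ≤ ρ i * ∑ j, |e j| := by
  have hν0 : 0 ≤ ν i := by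
    obtain ⟨j, hj, hje⟩ := hν_mem i
    rw [hje]; positivity
  have hrow : ∑ j, C i j * e j = 0 := by
    have := congrFun he i
    simpa [Matrix.mulVec, dotProduct] using this
  have hsplit : C i i * e i + ∑ j ∈ Finset.univ.erase i, C i j * e j = 0 := by
    rw [Finset.add_sum_erase Finset.univ (fun j => C i j * e j) (Finset.mem_univ i)]
    exact hrow
  have hkey : C i i * |e i| ≤ ν i * C i i * ∑ j ∈ Finset.univ.erase i, |e j| := by
    have h1 : C i i * e i = -∑ j ∈ Finset.univ.erase i, C i j * e j := by linarith
    calc C i i * |e i| = |C i i * e i| := by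
          rw [abs_mul, abs_of_pos hcii]
      _ = |∑ j ∈ Finset.univ.erase i, C i j * e j| := by rw [h1, abs_neg]
      _ ≤ ∑ j ∈ Finset.univ.erase i, |C i j * e j| := Finset.abs_sum_le_sum_abs _ _
      _ ≤ ∑ j ∈ Finset.univ.erase i, ν i * C i i * |e j| := by
          refine Finset.sum_le_sum fun j hj => ?_
          rw [abs_mul]
          have hjne : j ≠ i := Finset.ne_of_mem_erase hj
          have := hν_ub i j hjne
          have hcij : |C i j| ≤ ν i * C i i := by
            rw [div_le_iff₀ hcii] at this; linarith
          exact mul_le_mul_of_nonneg_right hcij (abs_nonneg _)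
      _ = ν i * C i i * ∑ j ∈ Finset.univ.erase i, |e j| := by
          rw [Finset.mul_sum]
  have hsum : ∑ j ∈ Finset.univ.erase i, |e j| = (∑ j, |e j|) - |e i| := by
    have := Finset.add_sum_erase Finset.univ (fun j => |e j|) (Finset.mem_univ i)
    linarith
  rw [hsum] at hkey
  have h2 : |e i| ≤ ν i * ((∑ j, |e j|) - |e i|) := by
    have := mul_le_mul_of_nonneg_left hkey (le_of_lt (inv_pos.mpr hcii))
    have hne : C i i ≠ 0 := ne_of_gt hcii
    calc |e i| = (C i i)⁻¹ * (C i i * |e i|) := by field_simp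
      _ ≤ (C i i)⁻¹ * (ν i * C i i * ((∑ j, |e j|) - |e i|)) := this
      _ = ν i * ((∑ j, |e j|) - |e i|) := by field_simp
  rw [hρ, div_mul_eq_mul_div, le_div_iff₀ (by linarith : (0:ℝ) < 1 + ν i)]
  nlinarith [abs_nonneg (e i)]
end

section
/- Suppose x ∈ ℝ^m is supported on S, A has nonzero columns, and the accumulated score ρ(S) = Σ_{i∈S} ρ(i) < 1/2. Then x is the unique minimizer of ‖z‖₁ subject to A z = A x. -/
open Matrix

/-- Theorem 1: if `x` is supported on `S` and `ρ(S) = ∑_{i∈S} ρ i < 1/2`,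
then `x` is the unique `ℓ¹` minimizer subject to `A z = A x`. -/
theorem stmt_2 {n m : ℕ} (A : Matrix (Fin n) (Fin m) ℝ)
    (hcols : ∀ i, (fun k => A k i) ≠ 0)
    (C : Matrix (Fin m) (Fin m) ℝ) (hC : C = Aᵀ * A)
    (ν ρ : Fin m → ℝ)
    (hν_ub : ∀ i, ∀ j ≠ i, |C i j| / C i i ≤ ν i)
    (hν_mem : ∀ i, ∃ j ≠ i, ν i = |C i j| / C i i)
    (hρ : ∀ i, ρ i = ν i / (1 + ν i))
    (x : Fin m → ℝ) (S : Finset (Fin m))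
    (hsupp : ∀ i ∉ S, x i = 0)
    (hASF : ∑ i ∈ S, ρ i < 1 / 2) :
    ∀ z : Fin m → ℝ, A.mulVec z = A.mulVec x → z ≠ x →
      ∑ i, |x i| < ∑ i, |z i| := by
  intro z hz hne
  set h : Fin m → ℝ := z - x with hh
  have hAh : A.mulVec h = 0 := by
    simp [hh, Matrix.mulVec_sub, hz]
  have hCh : C.mulVec h = 0 := by
    rw [hC, ← Matrix.mulVec_mulVec, hAh, Matrix.mulVec_zero]
  have hCii : ∀ i, 0 < C i i := by
    intro i
    have hCii' : C i i = ∑ k, A k i ^ 2 := by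
      simp [hC, Matrix.mul_apply, Matrix.transpose_apply, sq]
    rw [hCii']
    apply Finset.sum_pos' (fun k _ => sq_nonneg _)
    by_contra hcon
    push_neg at hcon
    apply hcols i
    funext k
    have hk := hcon k (Finset.mem_univ k)
    have : A k i ^ 2 = 0 := le_antisymm hk (sq_nonneg _)
    exact pow_eq_zero_iff (two_ne_zero) |>.mp this
  have hν0 : ∀ i, 0 ≤ ν i := by
    intro i
    obtain ⟨j, hj, hje⟩ := hν_mem i
    rw [hje]
    exact div_nonneg (abs_nonneg _) (hCii i).le
  set T : ℝ := ∑ j, |h j| with hT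
  have hTnn : ∀ (t : Finset (Fin m)), ∑ j ∈ t, |h j| ≤ T := by
    intro t
    exact Finset.sum_le_sum_of_subset_of_nonneg (Finset.subset_univ t)
      (fun j _ _ => abs_nonneg _)
  have hT0 : 0 < T := by
    have hne0 : h ≠ 0 := by
      intro h0
      apply hne
      funext i
      have := congrFun h0 i
      simpa [hh, sub_eq_zero] using this
    obtain ⟨i, hi⟩ := Function.ne_iff.mp hne0
    have : 0 < |h i| := abs_pos.mpr hi
    calc 0 < |h i| := this
      _ ≤ T := by
        have := hTnn {i}
        simpa using this
  have hkey : ∀ i, |h i| ≤ ρ i * T := by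
    intro i
    have h0 : ∑ j, C i j * h j = 0 := by
      have := congrFun hCh i
      simpa [Matrix.mulVec, dotProduct] using this
    have hsplit : C i i * h i + ∑ j ∈ Finset.univ.erase i, C i j * h j = 0 := by
      rw [Finset.add_sum_erase _ (fun j => C i j * h j) (Finset.mem_univ i)]
      exact h0
    have heq : C i i * h i = -∑ j ∈ Finset.univ.erase i, C i j * h j := by
      linarith
    have hbound : C i i * |h i| ≤ C i i * (ν i * (T - |h i|)) := by
      have h1 : C i i * |h i| = |C i i * h i| := by
        rw [abs_mul, abs_of_pos (hCii i)]
      rw [h1, heq, abs_neg]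
      calc |∑ j ∈ Finset.univ.erase i, C i j * h j|
          ≤ ∑ j ∈ Finset.univ.erase i, |C i j * h j| :=
            Finset.abs_sum_le_sum_abs _ _
        _ ≤ ∑ j ∈ Finset.univ.erase i, ν i * C i i * |h j| := by
            apply Finset.sum_le_sum
            intro j hj
            rw [abs_mul]
            apply mul_le_mul_of_nonneg_right _ (abs_nonneg _)
            have := hν_ub i j (Finset.ne_of_mem_erase hj)
            rw [div_le_iff₀ (hCii i)] at this
            linarith [this]
        _ = C i i * (ν i * (T - |h i|)) := by
            rw [← Finset.mul_sum]
            have : ∑ j ∈ Finset.univ.erase i, |h j| = T - |h i| := by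
              have := Finset.add_sum_erase _ (fun j => |h j|) (Finset.mem_univ i)
              simp only [hT]
              linarith [this]
            rw [this]; ring
    have h2 : |h i| ≤ ν i * (T - |h i|) :=
      le_of_mul_le_mul_left hbound (hCii i)
    have hpos : 0 < 1 + ν i := by linarith [hν0 i]
    rw [hρ i, div_mul_eq_mul_div, le_div_iff₀ hpos]
    nlinarith [hν0 i]
  have hsumS : ∑ i ∈ S, |h i| < T / 2 := by
    calc ∑ i ∈ S, |h i| ≤ ∑ i ∈ S, ρ i * T :=
          Finset.sum_le_sum (fun i _ => hkey i)
      _ = (∑ i ∈ S, ρ i) * T := by rw [Finset.sum_mul]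
      _ < (1 / 2) * T := by
          apply mul_lt_mul_of_pos_right hASF hT0
      _ = T / 2 := by ring
  -- split sums over S and Sᶜ
  have hxsum : ∑ i, |x i| = ∑ i ∈ S, |x i| := by
    rw [← Finset.sum_subset (Finset.subset_univ S)]
    intro i _ hiS
    rw [hsupp i hiS, abs_zero]
  have hzsplit : ∑ i, |z i| = ∑ i ∈ S, |z i| + ∑ i ∈ Sᶜ, |z i| :=
    (Finset.sum_add_sum_compl S _).symm
  have hTsplit : ∑ i ∈ S, |h i| + ∑ i ∈ Sᶜ, |h i| = T :=
    Finset.sum_add_sum_compl S _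
  have hzc : ∑ i ∈ Sᶜ, |z i| = ∑ i ∈ Sᶜ, |h i| := by
    apply Finset.sum_congr rfl
    intro i hi
    have : x i = 0 := hsupp i (Finset.mem_compl.mp hi)
    simp [hh, this]
  have hzS : ∑ i ∈ S, |x i| - ∑ i ∈ S, |h i| ≤ ∑ i ∈ S, |z i| := by
    rw [← Finset.sum_sub_distrib]
    apply Finset.sum_le_sum
    intro i _
    have : z i = x i + h i := by simp [hh]
    rw [this]
    calc |x i| - |h i| ≤ |x i + h i| := by
          have := abs_add_le (x i + h i) (-h i)
          simp at this
          linarith [this]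
      _ = |x i + h i| := rfl
  rw [hxsum, hzsplit, hzc]
  linarith [hzS, hsumS, hTsplit]
end

section
/- If the scores ρ(1) ≥ ρ(2) ≥ ... ≥ ρ(m) are sorted in non-increasing order and l* is the largest integer such that Σ_{i=1}^{l*} ρ(i) < 1/2, then every vector x with ‖x‖₀ ≤ l* is exactly recovered by ℓ1 minimization: x is the unique minimizer of ‖z‖₁ subject to A z = A x. -/
open Matrix


lemma fin_strictMono_le {k m : ℕ} (e : Fin k → Fin m) (he : StrictMono e) (i : Fin k) :
    (i : ℕ) ≤ (e i : ℕ) := by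
  induction' hn : (i : ℕ) with j ih generalizing i
  · omega
  · have hjk : j < k := by omega
    have h1 : (⟨j, hjk⟩ : Fin k) < i := by rw [Fin.lt_def]; simp [hn]
    have h2 := he h1
    have h3 := ih ⟨j, hjk⟩ rfl
    rw [Fin.lt_def] at h2
    omega

lemma sorted_sum_le {m : ℕ} (ρ : Fin m → ℝ) (hnn : ∀ i, 0 ≤ ρ i)
    (hsorted : ∀ i j : Fin m, i ≤ j → ρ j ≤ ρ i)
    (S : Finset (Fin m)) (l : ℕ) (hS : S.card ≤ l) :
    ∑ i ∈ S, ρ i ≤ ∑ i ∈ Finset.univ.filter (fun i : Fin m => (i : ℕ) < l), ρ i := by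
  have hkm : S.card ≤ m := S.card_le_univ.trans (by simp)
  have h1 : ∑ i ∈ S, ρ i = ∑ i : Fin S.card, ρ (S.orderEmbOfFin rfl i) := by
    rw [← Finset.sum_attach S (fun i => ρ i)]
    exact (Fintype.sum_equiv (S.orderIsoOfFin rfl).toEquiv _ _ (fun i => by rfl)).symm
  rw [h1]
  have h2 : ∀ i : Fin S.card, ρ (S.orderEmbOfFin rfl i) ≤ ρ (Fin.castLE hkm i) := by
    intro i
    apply hsorted
    have := fin_strictMono_le _ (S.orderEmbOfFin rfl).strictMono i
    rw [Fin.le_def]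
    simpa using this
  calc ∑ i : Fin S.card, ρ (S.orderEmbOfFin rfl i)
      ≤ ∑ i : Fin S.card, ρ (Fin.castLE hkm i) := Finset.sum_le_sum (fun i _ => h2 i)
    _ = ∑ i ∈ Finset.univ.filter (fun i : Fin m => (i : ℕ) < S.card), ρ i := by
        have : Finset.univ.filter (fun i : Fin m => (i : ℕ) < S.card)
            = Finset.univ.map (Fin.castLEEmb hkm) := by
          ext j
          simp only [Finset.mem_filter, Finset.mem_map, Finset.mem_univ, true_and]
          constructor
          · intro hj; exact ⟨⟨(j : ℕ), hj⟩, by simp [Fin.ext_iff]⟩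
          · rintro ⟨i, _, rfl⟩; simpa using i.2
        rw [this, Finset.sum_map]
        rfl
    _ ≤ _ := by
        apply Finset.sum_le_sum_of_subset_of_nonneg
        · intro j hj
          simp only [Finset.mem_filter] at *
          exact ⟨hj.1, lt_of_lt_of_le hj.2 hS⟩
        · intro i _ _; exact hnn i

/-- Corollary 1: if the scores `ρ` are sorted non-increasingly and `l*` is the
largest integer with `∑_{i=1}^{l*} ρ i < 1/2`, then every `x` with
`‖x‖₀ ≤ l*` is the unique `ℓ¹` minimizer subject to `A z = A x`. -/
theorem stmt_4 {n m : ℕ} (A : Matrix (Fin n) (Fin m) ℝ)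
    (hcols : ∀ i, (fun k => A k i) ≠ 0)
    (C : Matrix (Fin m) (Fin m) ℝ) (hC : C = Aᵀ * A)
    (ν ρ : Fin m → ℝ)
    (hν_ub : ∀ i, ∀ j ≠ i, |C i j| / C i i ≤ ν i)
    (hν_mem : ∀ i, ∃ j ≠ i, ν i = |C i j| / C i i)
    (hρ : ∀ i, ρ i = ν i / (1 + ν i))
    (hsorted : ∀ i j : Fin m, i ≤ j → ρ j ≤ ρ i)
    (lstar : ℕ)
    (hlstar : ∑ i ∈ Finset.univ.filter (fun i : Fin m => (i : ℕ) < lstar), ρ i < 1 / 2)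
    (hlargest : ∀ l : ℕ, l ≤ m →
      ∑ i ∈ Finset.univ.filter (fun i : Fin m => (i : ℕ) < l), ρ i < 1 / 2 → l ≤ lstar)
    (x : Fin m → ℝ)
    (hx : (Finset.univ.filter (fun i => x i ≠ 0)).card ≤ lstar) :
    ∀ z : Fin m → ℝ, A.mulVec z = A.mulVec x → z ≠ x →
      ∑ i, |x i| < ∑ i, |z i| := by
  intro z hAz hne
  rcases Nat.lt_or_ge m 2 with hm | hm
  · interval_cases m
    · exact absurd (funext fun i => i.elim0) hne
    · obtain ⟨j, hj, _⟩ := hν_mem 0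
      exact absurd (Subsingleton.elim j 0) hj
  -- positivity of diagonal
  have hCpos : ∀ i, 0 < C i i := by
    intro i
    have hdiag : C i i = ∑ k, A k i * A k i := by
      rw [hC]; simp [Matrix.mul_apply, Matrix.transpose_apply]
    rw [hdiag]
    obtain ⟨k, hk⟩ : ∃ k, A k i ≠ 0 := by
      by_contra hcon; push_neg at hcon; exact hcols i (funext hcon)
    exact Finset.sum_pos' (fun k _ => mul_self_nonneg _)
      ⟨k, Finset.mem_univ k, mul_self_pos.mpr hk⟩
  have hν0 : ∀ i, 0 ≤ ν i := by
    intro i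
    obtain ⟨j, _, heq⟩ := hν_mem i
    rw [heq]
    exact div_nonneg (abs_nonneg _) (hCpos i).le
  have hρ0 : ∀ i, 0 ≤ ρ i := by
    intro i
    rw [hρ]
    exact div_nonneg (hν0 i) (by linarith [hν0 i])
  -- kernel condition
  have hker : C.mulVec (z - x) = 0 := by
    rw [hC, ← Matrix.mulVec_mulVec, Matrix.mulVec_sub, hAz, sub_self, Matrix.mulVec_zero]
  set T := ∑ i, |z i - x i| with hTdef
  have hT : 0 < T := by
    obtain ⟨i, hi⟩ : ∃ i, z i - x i ≠ 0 := by
      by_contra hcon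
      push_neg at hcon
      exact hne (funext fun i => by linarith [hcon i, sub_eq_zero.mp (hcon i)])
    exact Finset.sum_pos' (fun j _ => abs_nonneg _)
      ⟨i, Finset.mem_univ i, abs_pos.mpr hi⟩
  -- key pointwise bound
  have key : ∀ i, |z i - x i| ≤ ρ i * T := by
    intro i
    have h0 : ∑ j, C i j * (z j - x j) = 0 := by
      have := congrFun hker i
      simpa [Matrix.mulVec, dotProduct] using this
    have hsplit : C i i * (z i - x i)
        + ∑ j ∈ Finset.univ.erase i, C i j * (z j - x j) = 0 :=
      (Finset.add_sum_erase Finset.univ (fun j => C i j * (z j - x j))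
        (Finset.mem_univ i)).trans h0
    have hsum_erase : ∑ j ∈ Finset.univ.erase i, |z j - x j| = T - |z i - x i| := by
      have := Finset.add_sum_erase Finset.univ (fun j => |z j - x j|) (Finset.mem_univ i)
      rw [hTdef]; linarith [this]
    have habs : C i i * |z i - x i|
        ≤ ∑ j ∈ Finset.univ.erase i, |C i j| * |z j - x j| := by
      have heq : C i i * (z i - x i)
          = -∑ j ∈ Finset.univ.erase i, C i j * (z j - x j) := by linarith
      calc C i i * |z i - x i| = |C i i * (z i - x i)| := by
            rw [abs_mul, abs_of_pos (hCpos i)]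
        _ = |∑ j ∈ Finset.univ.erase i, C i j * (z j - x j)| := by rw [heq, abs_neg]
        _ ≤ ∑ j ∈ Finset.univ.erase i, |C i j * (z j - x j)| :=
            Finset.abs_sum_le_sum_abs _ _
        _ = ∑ j ∈ Finset.univ.erase i, |C i j| * |z j - x j| := by
            simp [abs_mul]
    have hstep : ∑ j ∈ Finset.univ.erase i, |C i j| * |z j - x j|
        ≤ ν i * C i i * (T - |z i - x i|) := by
      calc ∑ j ∈ Finset.univ.erase i, |C i j| * |z j - x j|
          ≤ ∑ j ∈ Finset.univ.erase i, (ν i * C i i) * |z j - x j| := by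
            apply Finset.sum_le_sum
            intro j hj
            have hji : j ≠ i := Finset.ne_of_mem_erase hj
            have hub := hν_ub i j hji
            rw [div_le_iff₀ (hCpos i)] at hub
            exact mul_le_mul_of_nonneg_right hub (abs_nonneg _)
        _ = ν i * C i i * (T - |z i - x i|) := by rw [← Finset.mul_sum, hsum_erase]
    have h4 : |z i - x i| ≤ ν i * (T - |z i - x i|) := by
      have hc := hCpos i
      have := habs.trans hstep
      nlinarith
    rw [hρ, div_mul_eq_mul_div, le_div_iff₀ (by linarith [hν0 i])]
    nlinarith [h4]
  set S := Finset.univ.filter (fun i => x i ≠ 0) with hSdef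
  have hsum_S : ∑ i ∈ S, |z i - x i| ≤ (∑ i ∈ S, ρ i) * T := by
    rw [Finset.sum_mul]
    exact Finset.sum_le_sum (fun i _ => key i)
  have hρS : ∑ i ∈ S, ρ i ≤ ∑ i ∈ Finset.univ.filter (fun i : Fin m => (i : ℕ) < lstar), ρ i :=
    sorted_sum_le ρ hρ0 hsorted S lstar hx
  have hhalf : ∑ i ∈ S, |z i - x i| < T / 2 := by
    calc ∑ i ∈ S, |z i - x i| ≤ (∑ i ∈ S, ρ i) * T := hsum_S
      _ ≤ (∑ i ∈ Finset.univ.filter (fun i : Fin m => (i : ℕ) < lstar), ρ i) * T :=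
          mul_le_mul_of_nonneg_right hρS hT.le
      _ < (1 / 2) * T := mul_lt_mul_of_pos_right hlstar hT
      _ = T / 2 := by ring
  -- final accounting
  have hxsum : ∑ i, |x i| = ∑ i ∈ S, |x i| := by
    rw [← Finset.sum_filter_add_sum_filter_not Finset.univ (fun i => x i ≠ 0) (fun i => |x i|)]
    have hz0 : ∑ i ∈ Finset.univ.filter (fun i => ¬ x i ≠ 0), |x i| = 0 := by
      apply Finset.sum_eq_zero
      intro i hi
      simp only [Finset.mem_filter, not_not] at hi
      simp [hi.2]
    rw [hz0, add_zero]
  have hzsum : ∑ i, |z i| = ∑ i ∈ S, |z i|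
      + ∑ i ∈ Finset.univ.filter (fun i => ¬ x i ≠ 0), |z i - x i| := by
    rw [← Finset.sum_filter_add_sum_filter_not Finset.univ (fun i => x i ≠ 0) (fun i => |z i|)]
    congr 1
    apply Finset.sum_congr rfl
    intro i hi
    simp only [Finset.mem_filter, not_not] at hi
    rw [hi.2, sub_zero]
  have hTsplit : T = ∑ i ∈ S, |z i - x i|
      + ∑ i ∈ Finset.univ.filter (fun i => ¬ x i ≠ 0), |z i - x i| :=
    (Finset.sum_filter_add_sum_filter_not Finset.univ (fun i => x i ≠ 0)
      (fun i => |z i - x i|)).symm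
  have hlb : ∑ i ∈ S, |x i| - ∑ i ∈ S, |z i - x i| ≤ ∑ i ∈ S, |z i| := by
    rw [← Finset.sum_sub_distrib]
    apply Finset.sum_le_sum
    intro i _
    have h1 := abs_sub_abs_le_abs_sub (x i) (z i)
    have h2 : |x i - z i| = |z i - x i| := abs_sub_comm _ _
    linarith
  linarith
end

section
/- If A has unit-norm columns with coherence μ and k < (1/2)(1 + μ⁻¹), then for every set S with |S| = k one has Σ_{i∈S} ρ(i) < 1/2; consequently the ASF-based recoverable sparsity bound l* is at least k. (ASF bound is at least as sharp as the coherence bound.) -/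
open Matrix

/-- If `A` has unit-norm columns with coherence `μ` and `k < (1/2)(1 + μ⁻¹)`,
then every set `S` with `|S| = k` satisfies `∑_{i∈S} ρ i < 1/2`; consequently
the ASF bound `l*` is at least `k`. -/
theorem stmt_7 {n m : ℕ} (A : Matrix (Fin n) (Fin m) ℝ)
    (hunit : ∀ i, ∑ k, (A k i) ^ 2 = 1)
    (C : Matrix (Fin m) (Fin m) ℝ) (hC : C = Aᵀ * A)
    (μ : ℝ) (hμpos : 0 < μ)
    (hμ_ub : ∀ i j, i ≠ j → |C i j| ≤ μ)
    (hμ_mem : ∃ i j, i ≠ j ∧ μ = |C i j|)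
    (ν ρ : Fin m → ℝ)
    (hν_ub : ∀ i, ∀ j ≠ i, |C i j| ≤ ν i)
    (hν_mem : ∀ i, ∃ j ≠ i, ν i = |C i j|)
    (hρ : ∀ i, ρ i = ν i / (1 + ν i))
    (k : ℕ) (hk_pos : 0 < k) (hk_le : k ≤ m)
    (hk : (k : ℝ) < (1 / 2) * (1 + 1 / μ)) :
    (∀ S : Finset (Fin m), S.card = k → ∑ i ∈ S, ρ i < 1 / 2) ∧
    (∀ lstar : ℕ,
      IsGreatest {l : ℕ | l ≤ m ∧
        ∀ S : Finset (Fin m), S.card = l → ∑ i ∈ S, ρ i < 1 / 2} lstar →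
      k ≤ lstar) := by
  have hν_nonneg : ∀ i, 0 ≤ ν i := by
    intro i
    obtain ⟨j, hj, hji⟩ := hν_mem i
    rw [hji]; exact abs_nonneg _
  have hν_le : ∀ i, ν i ≤ μ := by
    intro i
    obtain ⟨j, hj, hji⟩ := hν_mem i
    rw [hji]; exact hμ_ub i j (Ne.symm hj)
  have hρ_le : ∀ i, ρ i ≤ μ / (1 + μ) := by
    intro i
    rw [hρ i]
    have h1 : (0:ℝ) < 1 + ν i := by linarith [hν_nonneg i]
    have h2 : (0:ℝ) < 1 + μ := by linarith
    rw [div_le_div_iff₀ h1 h2]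
    nlinarith [hν_le i, hν_nonneg i]
  have key : ∀ S : Finset (Fin m), S.card = k → ∑ i ∈ S, ρ i < 1 / 2 := by
    intro S hS
    calc ∑ i ∈ S, ρ i ≤ ∑ _i ∈ S, μ / (1 + μ) :=
          Finset.sum_le_sum fun i _ => hρ_le i
      _ = k * (μ / (1 + μ)) := by rw [Finset.sum_const, hS]; ring
      _ < 1 / 2 := by
          have h2 : (0:ℝ) < 1 + μ := by linarith
          have hμinv : μ * (1 / μ) = 1 := mul_one_div_cancel hμpos.ne'
          rw [mul_div_assoc', div_lt_iff₀ h2]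
          nlinarith [hk, hμpos]
  refine ⟨key, fun lstar hl => hl.2 ⟨hk_le, key⟩⟩
end

section
/- If A has unit-norm columns with coherence μ and a vector x has sparsity ‖x‖₀ = k with k·μ/(1+μ) < 1/2, then x is the unique ℓ1 minimizer subject to A z = A x. -/
open Matrix

/-- Coherence-based recovery: if `A` has unit-norm columns with coherence `μ`
and `x` has at most `k` nonzero entries with `k·μ/(1+μ) < 1/2`, then `x` is
the unique `ℓ¹` minimizer subject to `A z = A x`. -/
theorem stmt_9 {n m : ℕ} (A : Matrix (Fin n) (Fin m) ℝ)
    (hunit : ∀ i, ∑ l, (A l i) ^ 2 = 1)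
    (C : Matrix (Fin m) (Fin m) ℝ) (hC : C = Aᵀ * A)
    (μ : ℝ) (hμpos : 0 < μ)
    (hμ_ub : ∀ i j, i ≠ j → |C i j| ≤ μ)
    (hμ_mem : ∃ i j, i ≠ j ∧ μ = |C i j|)
    (k : ℕ) (x : Fin m → ℝ)
    (hx : (Finset.univ.filter (fun i => x i ≠ 0)).card ≤ k)
    (hk : (k : ℝ) * μ / (1 + μ) < 1 / 2) :
    ∀ z : Fin m → ℝ, A.mulVec z = A.mulVec x → z ≠ x →
      ∑ i, |x i| < ∑ i, |z i| := by
  intro z hz hne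
  classical
  set h : Fin m → ℝ := fun i => z i - x i with hhdef
  have hAh : A.mulVec h = 0 := by
    have : A.mulVec h = A.mulVec z - A.mulVec x := by
      ext l
      simp [hhdef, Matrix.mulVec, dotProduct, mul_sub, Finset.sum_sub_distrib]
    rw [this, hz, sub_self]
  have hCh : C.mulVec h = 0 := by
    rw [hC, ← Matrix.mulVec_mulVec, hAh, Matrix.mulVec_zero]
  have hCii : ∀ i, C i i = 1 := by
    intro i
    rw [hC, Matrix.mul_apply]
    simp only [Matrix.transpose_apply]
    rw [← hunit i]
    congr 1; ext l; ring
  set T : ℝ := ∑ j, |h j| with hTdef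
  -- T > 0 since h ≠ 0
  have hne' : ∃ i, h i ≠ 0 := by
    by_contra hc
    push_neg at hc
    apply hne
    funext i
    have := hc i
    simp only [hhdef] at this
    linarith [this]
  obtain ⟨i0, hi0⟩ := hne'
  have hT0 : 0 < T := by
    have h1 : |h i0| ≤ T := by
      apply Finset.single_le_sum (fun j _ => abs_nonneg (h j)) (Finset.mem_univ i0)
    have h2 : 0 < |h i0| := abs_pos.mpr hi0
    linarith
  -- key pointwise bound
  have key : ∀ i, |h i| * (1 + μ) ≤ μ * T := by
    intro i
    have h0 : ∑ j, C i j * h j = 0 := congrFun hCh i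
    have hsplit : C i i * h i + ∑ j ∈ Finset.univ.erase i, C i j * h j = 0 := by
      rw [Finset.add_sum_erase _ (fun j => C i j * h j) (Finset.mem_univ i)]
      exact h0
    rw [hCii i, one_mul] at hsplit
    have heq : h i = -(∑ j ∈ Finset.univ.erase i, C i j * h j) := by linarith
    have hb : |h i| ≤ ∑ j ∈ Finset.univ.erase i, μ * |h j| := by
      rw [heq, abs_neg]
      calc |∑ j ∈ Finset.univ.erase i, C i j * h j|
          ≤ ∑ j ∈ Finset.univ.erase i, |C i j * h j| := Finset.abs_sum_le_sum_abs _ _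
        _ ≤ ∑ j ∈ Finset.univ.erase i, μ * |h j| := by
            apply Finset.sum_le_sum
            intro j hj
            rw [abs_mul]
            exact mul_le_mul_of_nonneg_right
              (hμ_ub i j (fun hij => (Finset.mem_erase.mp hj).1 hij.symm)) (abs_nonneg _)
    have herase : ∑ j ∈ Finset.univ.erase i, |h j| = T - |h i| := by
      rw [hTdef, eq_sub_iff_add_eq, Finset.sum_erase_add _ _ (Finset.mem_univ i)]
    rw [← Finset.mul_sum, herase] at hb
    nlinarith
  set S : Finset (Fin m) := Finset.univ.filter (fun i => x i ≠ 0) with hSdef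
  have hSsum : ∑ i ∈ S, |h i| * (1 + μ) ≤ (k : ℝ) * (μ * T) := by
    calc ∑ i ∈ S, |h i| * (1 + μ) ≤ ∑ _i ∈ S, μ * T :=
          Finset.sum_le_sum (fun i _ => key i)
      _ = (S.card : ℝ) * (μ * T) := by rw [Finset.sum_const, nsmul_eq_mul]
      _ ≤ (k : ℝ) * (μ * T) := by
          apply mul_le_mul_of_nonneg_right _ (by positivity)
          exact_mod_cast hx
  have h1μ : (0:ℝ) < 1 + μ := by linarith
  have hk' : 2 * ((k : ℝ) * μ) < 1 + μ := by
    rw [div_lt_iff₀ h1μ] at hk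
    linarith
  have hShalf : ∑ i ∈ S, |h i| < T / 2 := by
    have hS1 : (∑ i ∈ S, |h i|) * (1 + μ) ≤ (k : ℝ) * (μ * T) := by
      rw [Finset.sum_mul]; exact hSsum
    nlinarith
  -- final comparison
  have hxS : ∑ i, |x i| = ∑ i ∈ S, |x i| := by
    rw [eq_comm]
    apply Finset.sum_subset (Finset.subset_univ S)
    intro i _ hi
    simp only [hSdef, Finset.mem_filter, Finset.mem_univ, true_and, not_not] at hi
    simp [hi]
  have hTsplit : T = ∑ i ∈ S, |h i| + ∑ i ∈ Finset.univ.filter (fun i => ¬ x i ≠ 0), |h i| := by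
    rw [hTdef, ← Finset.sum_filter_add_sum_filter_not Finset.univ (fun i => x i ≠ 0)]
  have hzsplit : ∑ i, |z i| =
      ∑ i ∈ S, |z i| + ∑ i ∈ Finset.univ.filter (fun i => ¬ x i ≠ 0), |z i| := by
    rw [← Finset.sum_filter_add_sum_filter_not Finset.univ (fun i => x i ≠ 0)]
  have hcomp : ∑ i ∈ Finset.univ.filter (fun i => ¬ x i ≠ 0), |z i|
      = ∑ i ∈ Finset.univ.filter (fun i => ¬ x i ≠ 0), |h i| := by
    apply Finset.sum_congr rfl
    intro i hi
    simp only [Finset.mem_filter, not_not] at hi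
    simp [hhdef, hi.2]
  have hzS : ∑ i ∈ S, |x i| - ∑ i ∈ S, |h i| ≤ ∑ i ∈ S, |z i| := by
    rw [← Finset.sum_sub_distrib]
    apply Finset.sum_le_sum
    intro i _
    have := abs_sub_abs_le_abs_sub (x i) (z i)
    have h2 : |x i - z i| = |h i| := by rw [← abs_neg]; congr 1; simp [hhdef]
    linarith
  rw [hzsplit, hcomp, hxS]
  have := hTsplit
  linarith
end

section
/- Let C = AᵀA, and for |T| = s let k_max = max over T of λ_max(A_TᵀA_T) and k_min = min over T of λ_min(A_TᵀA_T). Then there exist indices h, l such that c_hh − k_min ≤ (s−1)·max_{j≠h}|c_hj| and k_max − c_ll ≤ (s−1)·max_{j≠l}|c_lj|. -/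
/-! Every eigenvalue of a Gram submatrix `A_TᵀA_T` lies in a Gershgorin disc
`|λ - c_hh| ≤ ∑_{j ∈ T, j ≠ h} |c_hj|` of that submatrix, and its radius is at most
`(s - 1)·max_{j≠h}|c_hj|`. Applied to an `s`-subset `T` realising `k_min`, resp. `k_max`,
this gives the two inequalities. -/

open Matrix

theorem Matrix.isHermitian_transpose_mul_self {m n α : Type*} [Fintype m] [CommRing α]
    [StarRing α] [TrivialStar α] (A : Matrix m n α) : (Aᵀ * A).IsHermitian := by
  simpa [conjTranspose_eq_transpose_of_trivial] using isHermitian_conjTranspose_mul_self A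

open Finset

namespace Matrix

variable {ι : Type*} [Fintype ι] [DecidableEq ι]

theorem IsHermitian.exists_abs_eigenvalues_sub_diag_le_sum {B : Matrix ι ι ℝ}
    (hB : B.IsHermitian) (i : ι) :
    ∃ k, |hB.eigenvalues i - B k k| ≤ ∑ j ∈ univ.erase k, |B k j| := by
  have hmem : hB.eigenvalues i ∈ spectrum ℝ (toLin' B) := by
    have := hB.eigenvalues_mem_spectrum_real i
    rwa [← AlgEquiv.spectrum_eq toLinAlgEquiv' B] at this
  obtain ⟨k, hk⟩ := eigenvalue_mem_ball (Module.End.HasEigenvalue.of_mem_spectrum hmem)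
  exact ⟨k, by simpa only [Metric.mem_closedBall, Real.dist_eq, Real.norm_eq_abs] using hk⟩

theorem IsHermitian.exists_abs_eigenvalues_sub_diag_le_mul {B : Matrix ι ι ℝ}
    (hB : B.IsHermitian) {c : ι → ℝ} (hc : ∀ k, ∀ j ≠ k, |B k j| ≤ c k) (i : ι) :
    ∃ k, |hB.eigenvalues i - B k k| ≤ ((Fintype.card ι : ℝ) - 1) * c k := by
  obtain ⟨k, hk⟩ := hB.exists_abs_eigenvalues_sub_diag_le_sum i
  refine ⟨k, hk.trans ?_⟩
  calc ∑ j ∈ univ.erase k, |B k j|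
      ≤ (univ.erase k).card • c k :=
        sum_le_card_nsmul _ _ _ fun j hj => hc k j (ne_of_mem_erase hj)
    _ = ((Fintype.card ι : ℝ) - 1) * c k := by
        rw [card_erase_of_mem (mem_univ k), card_univ, nsmul_eq_mul,
          Nat.cast_pred (Fintype.card_pos_iff.2 ⟨i⟩)]

theorem exists_abs_eigenvalues_gram_submatrix_sub_diag_le {κ ν : Type*} [Fintype ν]
    (A : Matrix ν κ ℝ) {f : ι → κ} (hf : Function.Injective f) {c : κ → ℝ}
    (hc : ∀ k, ∀ j ≠ k, |(Aᵀ * A) k j| ≤ c k) (i : ι) :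
    ∃ k, |(isHermitian_transpose_mul_self (A.submatrix id f)).eigenvalues i - (Aᵀ * A) k k|
      ≤ ((Fintype.card ι : ℝ) - 1) * c k := by
  have hgram : (A.submatrix id f)ᵀ * A.submatrix id f = (Aᵀ * A).submatrix f f := by
    rw [submatrix_mul _ _ _ id _ Function.bijective_id, transpose_submatrix]
  have hcf : ∀ k, ∀ j ≠ k, |((A.submatrix id f)ᵀ * A.submatrix id f) k j| ≤ c (f k) :=
    fun k j hjk => by rw [hgram]; exact hc (f k) (f j) (hf.ne hjk)
  obtain ⟨k, hk⟩ := (isHermitian_transpose_mul_self (A.submatrix id f))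
    |>.exists_abs_eigenvalues_sub_diag_le_mul hcf i
  exact ⟨f k, hk⟩

end Matrix

theorem stmt_11_general {n m s : ℕ} (hs : 1 ≤ s)
    (A : Matrix (Fin n) (Fin m) ℝ)
    (C : Matrix (Fin m) (Fin m) ℝ) (hC : C = Aᵀ * A)
    (lmax lmin : Finset (Fin m) → ℝ)
    (hlmax : ∀ T : Finset (Fin m), T.Nonempty →
      IsGreatest (Set.range
        (isHermitian_transpose_mul_self
          (A.submatrix id (fun i : {j // j ∈ T} => i.1))).eigenvalues) (lmax T))
    (hlmin : ∀ T : Finset (Fin m), T.Nonempty →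
      IsLeast (Set.range
        (isHermitian_transpose_mul_self
          (A.submatrix id (fun i : {j // j ∈ T} => i.1))).eigenvalues) (lmin T))
    (kmax kmin : ℝ)
    (hkmax : IsGreatest {r : ℝ | ∃ T : Finset (Fin m), T.card = s ∧ r = lmax T} kmax)
    (hkmin : IsLeast {r : ℝ | ∃ T : Finset (Fin m), T.card = s ∧ r = lmin T} kmin)
    (cmax : Fin m → ℝ)
    (hcmax_ub : ∀ i, ∀ j ≠ i, |C i j| ≤ cmax i) :
    (∃ h : Fin m, C h h - kmin ≤ ((s : ℝ) - 1) * cmax h) ∧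
    (∃ l : Fin m, kmax - C l l ≤ ((s : ℝ) - 1) * cmax l) := by
  subst hC
  have gershgorin : ∀ T : Finset (Fin m), T.card = s → ∀ μ ∈ Set.range
      (isHermitian_transpose_mul_self (A.submatrix id (fun i : {j // j ∈ T} => i.1))).eigenvalues,
      ∃ h, |μ - (Aᵀ * A) h h| ≤ ((s : ℝ) - 1) * cmax h := by
    rintro T rfl _ ⟨i, rfl⟩
    simpa only [Fintype.card_coe] using
      exists_abs_eigenvalues_gram_submatrix_sub_diag_le A Subtype.val_injective hcmax_ub i
  obtain ⟨Tmin, hTmin, rfl⟩ := hkmin.1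
  obtain ⟨Tmax, hTmax, rfl⟩ := hkmax.1
  obtain ⟨h, hh⟩ := gershgorin Tmin hTmin _ (hlmin Tmin (card_pos.mp (hTmin ▸ hs))).1
  obtain ⟨l, hl⟩ := gershgorin Tmax hTmax _ (hlmax Tmax (card_pos.mp (hTmax ▸ hs))).1
  exact ⟨⟨h, (abs_sub_le_iff.1 hh).2⟩, ⟨l, (abs_sub_le_iff.1 hl).1⟩⟩

/-- Lemma 2: with `k_max`, `k_min` the extremal eigenvalues over all `s`-column
Gram submatrices `A_TᵀA_T`, there exist indices `h`, `l` with
`c_hh - k_min ≤ (s-1)·max_{j≠h}|c_hj|` and `k_max - c_ll ≤ (s-1)·max_{j≠l}|c_lj|`. -/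
theorem stmt_11 {n m s : ℕ} (hs : 1 ≤ s) (hsm : s ≤ m)
    (A : Matrix (Fin n) (Fin m) ℝ)
    (C : Matrix (Fin m) (Fin m) ℝ) (hC : C = Aᵀ * A)
    (lmax lmin : Finset (Fin m) → ℝ)
    (hlmax : ∀ T : Finset (Fin m), T.Nonempty →
      IsGreatest (Set.range
        (isHermitian_transpose_mul_self
          (A.submatrix id (fun i : {j // j ∈ T} => i.1))).eigenvalues) (lmax T))
    (hlmin : ∀ T : Finset (Fin m), T.Nonempty →
      IsLeast (Set.range
        (isHermitian_transpose_mul_self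
          (A.submatrix id (fun i : {j // j ∈ T} => i.1))).eigenvalues) (lmin T))
    (kmax kmin : ℝ)
    (hkmax : IsGreatest {r : ℝ | ∃ T : Finset (Fin m), T.card = s ∧ r = lmax T} kmax)
    (hkmin : IsLeast {r : ℝ | ∃ T : Finset (Fin m), T.card = s ∧ r = lmin T} kmin)
    (cmax : Fin m → ℝ)
    (hcmax_ub : ∀ i, ∀ j ≠ i, |C i j| ≤ cmax i)
    (hcmax_mem : ∀ i, ∃ j ≠ i, cmax i = |C i j|) :
    (∃ h : Fin m, C h h - kmin ≤ ((s : ℝ) - 1) * cmax h) ∧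
    (∃ l : Fin m, kmax - C l l ≤ ((s : ℝ) - 1) * cmax l) :=
  stmt_11_general hs A C hC lmax lmin hlmax hlmin kmax kmin hkmax hkmin cmax hcmax_ub
end

section
/- For e ∈ ℝ^m with AᵀA e = 0 and any index i, (c_ii + |c_ik|)·|e_i| ≤ |c_ik|·‖e‖₁, where |c_ik| = max_{j≠i}|c_ij| and C = AᵀA. -/
open Matrix

/-- For `e ∈ ker (AᵀA)` and any index `i`,
`(c_ii + |c_ik|)·|e_i| ≤ |c_ik|·‖e‖₁` where `|c_ik| = max_{j≠i} |c_ij|`. -/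
theorem stmt_19 {n m : ℕ} (A : Matrix (Fin n) (Fin m) ℝ)
    (C : Matrix (Fin m) (Fin m) ℝ) (hC : C = Aᵀ * A)
    (e : Fin m → ℝ) (he : C.mulVec e = 0)
    (i : Fin m) (hcii : 0 < C i i)
    (cik : ℝ)
    (hub : ∀ j ≠ i, |C i j| ≤ cik)
    (hmem : ∃ j ≠ i, cik = |C i j|) :
    (C i i + cik) * |e i| ≤ cik * ∑ j, |e j| := by
  have hcik : 0 ≤ cik := by
    obtain ⟨j, hj, hjeq⟩ := hmem
    rw [hjeq]; exact abs_nonneg _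
  have h0 : ∑ j, C i j * e j = 0 := congrFun he i
  rw [← Finset.add_sum_erase _ _ (Finset.mem_univ i)] at h0
  have h1 : C i i * |e i| = |∑ j ∈ Finset.univ.erase i, C i j * e j| := by
    rw [← abs_of_pos hcii, ← abs_mul]
    have : C i i * e i = -∑ j ∈ Finset.univ.erase i, C i j * e j := by linarith
    rw [this, abs_neg]
  have h2 : |∑ j ∈ Finset.univ.erase i, C i j * e j|
      ≤ ∑ j ∈ Finset.univ.erase i, cik * |e j| := by
    refine (Finset.abs_sum_le_sum_abs _ _).trans (Finset.sum_le_sum fun j hj => ?_)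
    rw [abs_mul]
    exact mul_le_mul_of_nonneg_right (hub j (Finset.ne_of_mem_erase hj)) (abs_nonneg _)
  have h3 : ∑ j ∈ Finset.univ.erase i, cik * |e j|
      = cik * (∑ j, |e j|) - cik * |e i| := by
    rw [← Finset.mul_sum, ← Finset.add_sum_erase _ (fun j => |e j|) (Finset.mem_univ i)]
    ring
  nlinarith [abs_nonneg (e i)]
end
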